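/- One-sided lower binomial confidence bound: fix n ≥ 1 and α ∈ (0,1), and for x ∈ {0,…,n} define L_α(x) = inf{θ ∈ [0,1] : Σ_{i=x}^{n} C(n,i) θ^i (1−θ)^{n−i} ≥ α}. Then for every p ∈ [0,1] and X ∼ Binom(n,p), P(L_α(X) ≤ p) ≥ 1 − α; equivalently, Σ_{x : L_α(x) ≤ p} C(n,x) p^x (1−p)^{n−x} ≥ 1 − α. -/

import Mathlib

/-!
Let `m` be the least index whose upper binomial tail under `p` falls below `α` (it exists, since
the tail from `n + 1` is empty). Every `x < m` has tail at least `α` at `θ = p`, so `p` lies in the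
set defining `L_α(x)` and `L_α(x) ≤ p`. Hence the coverage is at least `P(X < m) = 1 - P(X ≥ m)`,
which exceeds `1 - α`.
-/

open Finset

theorem sum_range_sub_le_sum_of_le_sum_Icc_mem {f : ℕ → ℝ} {n : ℕ} {α : ℝ} {s : Finset ℕ}
    (hf : ∀ x, 0 ≤ f x) (hα : 0 < α) (hs : ∀ x ≤ n, α ≤ ∑ i ∈ Icc x n, f i → x ∈ s) :
    ∑ x ∈ range (n + 1), f x - α ≤ ∑ x ∈ s, f x := by
  have hsmall : ∃ m, ∑ i ∈ Icc m n, f i < α := ⟨n + 1, by simpa using hα⟩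
  set m := Nat.find hsmall
  have hmn : m ≤ n + 1 := Nat.find_min' hsmall (by simpa using hα)
  have hsub : range m ⊆ s := fun x hx => by
    rw [mem_range] at hx
    exact hs x (by omega) (not_lt.1 (Nat.find_min hsmall hx))
  calc ∑ x ∈ range (n + 1), f x - α
      = ∑ x ∈ range m, f x + (∑ i ∈ Icc m n, f i - α) := by
        rw [← sum_range_add_sum_Ico f hmn, Ico_add_one_right_eq_Icc]; ring
    _ ≤ ∑ x ∈ range m, f x := by linarith [Nat.find_spec hsmall]
    _ ≤ ∑ x ∈ s, f x := sum_le_sum_of_subset_of_nonneg hsub fun x _ _ => hf x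

theorem sum_range_choose_mul_pow_mul_one_sub_pow (n : ℕ) (p : ℝ) :
    ∑ x ∈ range (n + 1), (n.choose x : ℝ) * p ^ x * (1 - p) ^ (n - x) = 1 := by
  calc _ = (p + (1 - p)) ^ n := by rw [add_pow]; exact sum_congr rfl fun x _ => by ring
    _ = 1 := by rw [add_sub_cancel, one_pow]

theorem choose_mul_pow_mul_one_sub_pow_nonneg (n x : ℕ) {p : ℝ} (hp : p ∈ Set.Icc (0 : ℝ) 1) :
    0 ≤ (n.choose x : ℝ) * p ^ x * (1 - p) ^ (n - x) :=
  mul_nonneg (mul_nonneg (Nat.cast_nonneg _) (pow_nonneg hp.1 _))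
    (pow_nonneg (sub_nonneg.2 hp.2) _)

theorem clopper_pearson_lower_coverage_general
    (n : ℕ)
    (α : ℝ) (hα : α ∈ Set.Ioo (0 : ℝ) 1)
    (p : ℝ) (hp : p ∈ Set.Icc (0 : ℝ) 1) :
    1 - α ≤
      ∑ x ∈ (Finset.range (n + 1)).filter (fun x =>
          sInf {θ : ℝ | θ ∈ Set.Icc (0 : ℝ) 1 ∧
            α ≤ ∑ i ∈ Finset.Icc x n,
              (n.choose i : ℝ) * θ ^ i * (1 - θ) ^ (n - i)} ≤ p),
        (n.choose x : ℝ) * p ^ x * (1 - p) ^ (n - x) := by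
  refine (sub_le_sub_right (sum_range_choose_mul_pow_mul_one_sub_pow n p).ge α).trans <|
    sum_range_sub_le_sum_of_le_sum_Icc_mem
      (fun x => choose_mul_pow_mul_one_sub_pow_nonneg n x hp) hα.1 fun x hx htail => ?_
  rw [mem_filter, mem_range]
  exact ⟨Nat.lt_succ_of_le hx, csInf_le ⟨0, fun θ hθ => hθ.1.1⟩ ⟨hp, htail⟩⟩

/-- **Coverage of the one-sided lower Clopper–Pearson bound.**
With `L_α(x) = inf{θ ∈ [0,1] : Σ_{i=x}^n C(n,i) θ^i (1-θ)^(n-i) ≥ α}`, one has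
`P(L_α(X) ≤ p) ≥ 1 - α` for `X ∼ Binom(n,p)`. -/
theorem clopper_pearson_lower_coverage
    (n : ℕ) (hn : 1 ≤ n)
    (α : ℝ) (hα : α ∈ Set.Ioo (0 : ℝ) 1)
    (p : ℝ) (hp : p ∈ Set.Icc (0 : ℝ) 1) :
    1 - α ≤
      ∑ x ∈ (Finset.range (n + 1)).filter (fun x =>
          sInf {θ : ℝ | θ ∈ Set.Icc (0 : ℝ) 1 ∧
            α ≤ ∑ i ∈ Finset.Icc x n,
              (n.choose i : ℝ) * θ ^ i * (1 - θ) ^ (n - i)} ≤ p),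
        (n.choose x : ℝ) * p ^ x * (1 - p) ^ (n - x) :=
  clopper_pearson_lower_coverage_general n α hα p hp
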